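/- The path P_4 with 4 edges does not divide the 3-dimensional hypercube Q_3. -/

import Mathlib

open SimpleGraph

/-- `H` divides `G`: the edge set of `G` can be partitioned into edge sets of
subgraphs of `G`, each isomorphic to `H`. -/
def GraphDivides {α β : Type} (H : SimpleGraph α) (G : SimpleGraph β) : Prop :=
  ∃ (ι : Type) (f : ι → G.Subgraph),
    (∀ i, Nonempty (H ≃g (f i).coe)) ∧
    ∀ e ∈ G.edgeSet, ∃! i, e ∈ (f i).edgeSet

/-- The `n`-dimensional hypercube graph. -/
def cube (n : ℕ) : SimpleGraph (Fin n → ZMod 2) where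
  Adj x y := hammingDist x y = 1
  symm := ⟨fun x y h => by show hammingDist y x = 1; rw [hammingDist_comm]; exact h⟩
  loopless := ⟨fun x h => by simp [hammingDist_self] at h⟩

/-! A decomposition of `G` into copies of `H` splits the degree of every vertex of `G` into its
degrees in the copies. Summing over the vertices, `∑ deg_G = k · ∑ deg_H` for the number `k` of
copies; and a vertex of odd degree in `G` has odd degree in some copy, so `G` has at most `k` times
as many odd-degree vertices as `H`. For `Q₃` and `P₄` the first identity reads `24 = 8k`, so
`k = 3`, and then the eight odd vertices of `Q₃` would have to be among the `3 · 2` path ends. -/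

open Finset

namespace SimpleGraph

variable {V W : Type*}

lemma ncard_neighborSet_eq_degree (G : SimpleGraph V) (v : V) [Fintype (G.neighborSet v)] :
    (G.neighborSet v).ncard = G.degree v := by
  rw [Set.ncard_eq_toFinset_card', Set.toFinset_card, card_neighborSet_eq_degree]

namespace Subgraph

variable {H : SimpleGraph V} {G : SimpleGraph W} {S : G.Subgraph}

lemma ncard_neighborSet_of_iso (e : H ≃g S.coe) (w : V) :
    (S.neighborSet (e w)).ncard = (H.neighborSet w).ncard := by
  simp only [← Nat.card_coe_set_eq]
  exact Nat.card_congr ((S.coeNeighborSetEquiv (e w)).symm.trans (e.mapNeighborSet w).symm)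

lemma sum_ncard_neighborSet_of_iso [Fintype V] [Fintype W] {M : Type*} [AddCommMonoid M]
    (e : H ≃g S.coe) (φ : ℕ → M) (hφ : φ 0 = 0) :
    ∑ v, φ (S.neighborSet v).ncard = ∑ w, φ (H.neighborSet w).ncard := by
  symm
  refine sum_of_injOn (fun w => (e w : W)) ?_ (fun _ _ => mem_coe.2 (mem_univ _)) ?_ ?_
  · exact fun a _ b _ hab => e.injective (Subtype.ext hab)
  · intro v _ hv
    have hS : S.neighborSet v = ∅ := Set.eq_empty_of_forall_notMem fun u hu =>
      hv ⟨e.symm ⟨v, Subgraph.Adj.fst_mem hu⟩, by simp⟩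
    rw [hS, Set.ncard_empty, hφ]
  · intro w _
    rw [ncard_neighborSet_of_iso]

end Subgraph

end SimpleGraph

section EdgePartition

variable {ι V W : Type*} {H : SimpleGraph V} {G : SimpleGraph W} {f : ι → G.Subgraph}

lemma finite_of_edgePartition_of_iso [Finite W] {a b : V} (hab : H.Adj a b)
    (hiso : ∀ i, Nonempty (H ≃g (f i).coe))
    (hpart : ∀ e ∈ G.edgeSet, ∃! i, e ∈ (f i).edgeSet) : Finite ι := by
  have hedge : ∀ i, ∃ e ∈ G.edgeSet, e ∈ (f i).edgeSet := fun i => by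
    obtain ⟨φ⟩ := hiso i
    have hadj : (f i).Adj (φ a) (φ b) := φ.map_adj_iff.2 hab
    exact ⟨s(φ a, φ b), hadj.adj_sub, hadj⟩
  choose g hgG hgf using hedge
  refine Finite.of_injective (fun i => (⟨g i, hgG i⟩ : G.edgeSet)) fun i j hij => ?_
  have hg : g i = g j := congrArg Subtype.val hij
  obtain ⟨k, -, hk⟩ := hpart (g i) (hgG i)
  exact (hk i (hgf i)).trans (hk j (hg ▸ hgf j : g i ∈ (f j).edgeSet)).symm

lemma ncard_neighborSet_eq_sum_of_edgePartition [Fintype ι] [Finite W]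
    (hpart : ∀ e ∈ G.edgeSet, ∃! i, e ∈ (f i).edgeSet) (v : W) :
    (G.neighborSet v).ncard = ∑ i, ((f i).neighborSet v).ncard := by
  have hunion : G.neighborSet v = ⋃ i, (f i).neighborSet v := by
    ext w
    simp only [mem_neighborSet, Set.mem_iUnion, Subgraph.mem_neighborSet]
    refine ⟨fun h => ?_, fun ⟨i, hi⟩ => hi.adj_sub⟩
    obtain ⟨i, hi, -⟩ := hpart s(v, w) h
    exact ⟨i, hi⟩
  have hdisj : Pairwise (Function.onFun Disjoint fun i => (f i).neighborSet v) := fun i j hij =>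
    Set.disjoint_left.2 fun w (hwi : (f i).Adj v w) (hwj : (f j).Adj v w) => by
      obtain ⟨k, -, hk⟩ := hpart s(v, w) hwi.adj_sub
      exact hij ((hk i hwi).trans (hk j hwj).symm)
  rw [hunion, Set.ncard_iUnion_of_finite (fun _ => Set.toFinite _) hdisj,
    finsum_eq_sum_of_fintype]

end EdgePartition

section Counting

variable {ι V W : Type*} [Fintype ι] [Fintype V] [Fintype W]
  {H : SimpleGraph V} {G : SimpleGraph W} [DecidableRel H.Adj] [DecidableRel G.Adj]
  {f : ι → G.Subgraph}

lemma sum_degree_eq_card_mul_of_edgePartition (hiso : ∀ i, Nonempty (H ≃g (f i).coe))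
    (hpart : ∀ e ∈ G.edgeSet, ∃! i, e ∈ (f i).edgeSet) :
    ∑ v, G.degree v = Fintype.card ι * ∑ w, H.degree w := by
  calc ∑ v, G.degree v = ∑ v, ∑ i, ((f i).neighborSet v).ncard := by
        simp only [← ncard_neighborSet_eq_degree, ncard_neighborSet_eq_sum_of_edgePartition hpart]
    _ = ∑ i, ∑ v, ((f i).neighborSet v).ncard := sum_comm
    _ = ∑ _i : ι, ∑ w, H.degree w := sum_congr rfl fun i _ => by
        obtain ⟨e⟩ := hiso i
        simpa only [id, ncard_neighborSet_eq_degree] using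
          Subgraph.sum_ncard_neighborSet_of_iso e id rfl
    _ = Fintype.card ι * ∑ w, H.degree w := by rw [sum_const, card_univ, smul_eq_mul]

lemma card_odd_degree_le_card_mul_of_edgePartition (hiso : ∀ i, Nonempty (H ≃g (f i).coe))
    (hpart : ∀ e ∈ G.edgeSet, ∃! i, e ∈ (f i).edgeSet) :
    #{v | Odd (G.degree v)} ≤ Fintype.card ι * #{w | Odd (H.degree w)} := by
  classical
  have hcover : ({v | Odd (G.degree v)} : Finset W) ⊆
      univ.biUnion fun i => {v | Odd ((f i).neighborSet v).ncard} := by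
    intro v hv
    rw [mem_filter, ← ncard_neighborSet_eq_degree,
      ncard_neighborSet_eq_sum_of_edgePartition hpart] at hv
    obtain ⟨i, -, hi⟩ : ∃ i ∈ univ, ¬Even ((f i).neighborSet v).ncard := by
      by_contra! h
      exact Nat.not_even_iff_odd.2 hv.2 (even_sum _ h)
    exact mem_biUnion.2 ⟨i, mem_univ i, mem_filter.2 ⟨mem_univ v, Nat.not_even_iff_odd.1 hi⟩⟩
  calc #{v | Odd (G.degree v)}
      ≤ ∑ i, #{v | Odd ((f i).neighborSet v).ncard} := (card_le_card hcover).trans card_biUnion_le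
    _ = ∑ _i : ι, #{w | Odd (H.degree w)} := sum_congr rfl fun i _ => by
        obtain ⟨e⟩ := hiso i
        simpa only [card_filter, ncard_neighborSet_eq_degree] using
          Subgraph.sum_ncard_neighborSet_of_iso e (fun d => if Odd d then 1 else 0) rfl
    _ = Fintype.card ι * #{w | Odd (H.degree w)} := by rw [sum_const, card_univ, smul_eq_mul]

end Counting

instance (n : ℕ) : DecidableRel (pathGraph n).Adj := fun _ _ =>
  decidable_of_iff' _ pathGraph_adj

instance (n : ℕ) : DecidableRel (cube n).Adj := fun x y =>
  inferInstanceAs (Decidable (hammingDist x y = 1))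

lemma sum_degree_pathGraph_five : ∑ v, (pathGraph 5).degree v = 8 := by decide

lemma card_odd_degree_pathGraph_five : #{v | Odd ((pathGraph 5).degree v)} = 2 := by decide

lemma sum_degree_cube_three : ∑ v, (cube 3).degree v = 24 := by decide

lemma card_odd_degree_cube_three : #{v | Odd ((cube 3).degree v)} = 8 := by decide

theorem path4_not_divides_cube3 : ¬ GraphDivides (pathGraph 5) (cube 3) := by
  rintro ⟨ι, f, hiso, hpart⟩
  have : Finite ι := finite_of_edgePartition_of_iso (a := 0) (b := 1) (by decide) hiso hpart
  have : Fintype ι := Fintype.ofFinite ι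
  have hcard := sum_degree_eq_card_mul_of_edgePartition hiso hpart
  have hodd := card_odd_degree_le_card_mul_of_edgePartition hiso hpart
  rw [sum_degree_pathGraph_five, sum_degree_cube_three] at hcard
  rw [card_odd_degree_pathGraph_five, card_odd_degree_cube_three] at hodd
  omega
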